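/- The von Neumann entropy of the normalized Gram matrix of the purification vectors equals the entropy of Bob's conjugate-basis error distribution: for every attack E, the matrix σ indexed by I × I with entries σ_{ij} := 2^{-N} ⟨φ_j, φ_i⟩ is a density matrix whose eigenvalues (with multiplicity) are exactly (p̄(l))_{l ∈ I}; consequently S(σ) = H(A⊕B|b̄) = ∑_{c ∈ I} −p̄(c) log₂ p̄(c). -/

import Mathlib

open scoped ComplexInnerProductSpace ComplexOrder
open Finset

namespace IDT

/-- N-bit strings. -/
abbrev Bits (N : ℕ) := Fin N → ZMod 2

/-- Bitwise dot product `i·k := ∑ n i_n k_n` (lifting bits to naturals). -/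
def bdot {N : ℕ} (i k : Bits N) : ℕ := ∑ n, (i n).val * (k n).val

/-- Eve's attack: unitarity condition on the family of vectors. -/
def Attack {N M : ℕ} (E : Bits N → Bits N → EuclideanSpace ℂ (Fin M)) : Prop :=
  ∀ i k : Bits N, (∑ j : Bits N, ⟪E i j, E k j⟫) = if i = k then 1 else 0

/-- Conjugate-basis vectors `Ē l s := 2^{-N} ∑_{i,j} (-1)^{s·j + i·l} E i j`. -/
noncomputable def Ebar {N M : ℕ} (E : Bits N → Bits N → EuclideanSpace ℂ (Fin M))
    (l s : Bits N) : EuclideanSpace ℂ (Fin M) :=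
  (2 ^ N : ℂ)⁻¹ • ∑ i : Bits N, ∑ j : Bits N, ((-1 : ℂ) ^ (bdot s j + bdot i l)) • E i j

/-- Error distribution of Bob's conjugate-basis outcome. -/
noncomputable def pbar {N M : ℕ} (E : Bits N → Bits N → EuclideanSpace ℂ (Fin M))
    (c : Bits N) : ℝ :=
  (2 ^ N : ℝ)⁻¹ * ∑ i : Bits N, ‖Ebar E i (i + c)‖ ^ 2

/-- `-x log₂ x` (with the convention `0 log₂ 0 = 0`). -/
noncomputable def ent2 (x : ℝ) : ℝ := -(x * Real.logb 2 x)

/-- A POVM on `ℂ^M` with finite outcome set `A`. -/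
structure POVM (A : Type*) [Fintype A] (M : ℕ) where
  X : A → Matrix (Fin M) (Fin M) ℂ
  posSemidef : ∀ a : A, (X a).PosSemidef
  sum_one : ∑ a : A, X a = 1

/-- Eve's outcome probability `p(α|i)`. -/
noncomputable def pOut {N M : ℕ} {A : Type*} [Fintype A]
    (E : Bits N → Bits N → EuclideanSpace ℂ (Fin M)) (P : POVM A M) (a : A) (i : Bits N) : ℝ :=
  (∑ j : Bits N, ⟪E i j, Matrix.toEuclideanLin (P.X a) (E i j)⟫).re

/-- (base-2) Shannon mutual information of a joint distribution. -/
noncomputable def mutualInfo {S T : Type*} [Fintype S] [Fintype T] (p : S → T → ℝ) : ℝ :=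
  (∑ s, ent2 (∑ t, p s t)) + (∑ t, ent2 (∑ s, p s t)) - ∑ s, ∑ t, ent2 (p s t)

/-- Eve's information gain `I(A:E[X]|b)`. -/
noncomputable def infoGain {N M : ℕ} {A : Type*} [Fintype A]
    (E : Bits N → Bits N → EuclideanSpace ℂ (Fin M)) (P : POVM A M) : ℝ :=
  mutualInfo (fun (i : Bits N) (a : A) => (2 ^ N : ℝ)⁻¹ * pOut E P a i)

/-- Elementary tensor of two Euclidean-space vectors. -/
noncomputable def tens {α β : Type*} (u : EuclideanSpace ℂ α) (v : EuclideanSpace ℂ β) :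
    EuclideanSpace ℂ (α × β) :=
  (WithLp.equiv 2 ((α × β) → ℂ)).symm (fun p => u p.1 * v p.2)

/-- Symmetrized attack vectors. -/
noncomputable def Es {N M : ℕ} (E : Bits N → Bits N → EuclideanSpace ℂ (Fin M))
    (i j : Bits N) : EuclideanSpace ℂ (Bits N × Fin M) :=
  (((Real.sqrt (2 ^ N))⁻¹ : ℝ) : ℂ) •
    ∑ m : Bits N, ((-1 : ℂ) ^ bdot m (i + j)) • tens (EuclideanSpace.single m 1) (E (i + m) (j + m))

/-- The operator `|e_m⟩⟨e_m| ⊗ X` as a matrix on `ℂ^{2^N} ⊗ ℂ^M`. -/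
def projTens {N M : ℕ} (m : Bits N) (X : Matrix (Fin M) (Fin M) ℂ) :
    Matrix (Bits N × Fin M) (Bits N × Fin M) ℂ :=
  Matrix.of fun p q => (if p.1 = m ∧ q.1 = m then 1 else 0) * X p.2 q.2

/-- Purification vectors `φ_i`. -/
noncomputable def phi {N M : ℕ} (E : Bits N → Bits N → EuclideanSpace ℂ (Fin M))
    (i : Bits N) : EuclideanSpace ℂ ((Bits N × Fin M) × Bits N) :=
  ∑ j : Bits N, tens (Es E i j) (EuclideanSpace.single (i + j) 1)

/-- Rank-one projection `|ψ⟩⟨ψ|` as a matrix. -/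
noncomputable def outer {α : Type*} (ψ : EuclideanSpace ℂ α) : Matrix α α ℂ :=
  Matrix.of fun x y => ψ x * star (ψ y)

/-- Partial trace over the second tensor factor. -/
noncomputable def ptraceSnd {α β : Type*} [Fintype β] (Θ : Matrix (α × β) (α × β) ℂ) : Matrix α α ℂ :=
  Matrix.of fun i j => ∑ b : β, Θ (i, b) (j, b)

/-- Partial trace over the first tensor factor. -/
noncomputable def ptraceFst {α β : Type*} [Fintype α] (Θ : Matrix (α × β) (α × β) ℂ) : Matrix β β ℂ :=
  Matrix.of fun x y => ∑ a : α, Θ (a, x) (a, y)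

-- von Neumann entropy (base 2) of a Hermitian matrix (junk value `0` otherwise).
open Classical in
noncomputable def vN {n : Type*} [Fintype n] [DecidableEq n] (ρ : Matrix n n ℂ) : ℝ :=
  if h : ρ.IsHermitian then ∑ i, ent2 (h.eigenvalues i) else 0

/-- Classical–quantum state `∑ i p_i |e_i⟩⟨e_i| ⊗ ρ_i`. -/
def cqState {F G : Type*} [DecidableEq F] (p : F → ℝ) (ρ : F → Matrix G G ℂ) :
    Matrix (F × G) (F × G) ℂ :=
  Matrix.of fun x y => if x.1 = y.1 then (p x.1 : ℂ) * ρ x.1 x.2 y.2 else 0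

end IDT

/-!
By orthonormality of the register states, `σ i j` depends only on `i + j`: it is
`4⁻ᴺ S (i + j)` with `S u = ∑ a b, ⟪E (a + u) (b + u), E a b⟫`. A matrix of the form
`f (i + j)` on `(ZMod 2)ᴺ` is diagonalised by the normalised Hadamard matrix
`H i l = 2^(-N/2) (-1)^(i·l)`, its eigenvalues being the Walsh transform of `f`.
Expanding `‖Ē‖²` and summing the characters over `i` shows that the Walsh transform of
`4⁻ᴺ S` is exactly `p̄`. Hence `σ = H · diag p̄ · H`, which gives positivity, the spectrum
(through the characteristic polynomial) and the entropy; the trace is `2⁻ᴺ S 0 = 1` by unitarity.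
-/

lemma Equiv.exists_comp_eq_of_map_univ_eq {α β : Type*} [Fintype α] {f g : α → β}
    (h : Finset.univ.val.map f = Finset.univ.val.map g) : ∃ e : α ≃ α, ∀ a, f (e a) = g a := by
  classical
  have hfiber (b : β) : Fintype.card {a // g a = b} = Fintype.card {a // f a = b} := by
    have := congrArg (Multiset.count b) h
    simp only [Multiset.count_map, Fintype.card_subtype, Finset.card, Finset.filter_val] at this ⊢
    simpa only [eq_comm] using this.symm
  exact ⟨Equiv.ofFiberEquiv fun b => Fintype.equivOfCardEq (hfiber b),
    Equiv.ofFiberEquiv_map _⟩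

lemma Matrix.IsHermitian.exists_equiv_eigenvalues_eq {𝕜 n : Type*} [RCLike 𝕜] [Fintype n]
    [DecidableEq n] {A : Matrix n n 𝕜} (hA : A.IsHermitian) {d : n → ℝ}
    (h : A.charpoly = ∏ i, (Polynomial.X - Polynomial.C (d i : 𝕜))) :
    ∃ e : n ≃ n, ∀ i, hA.eigenvalues (e i) = d i := by
  have hroots := hA.roots_charpoly_eq_eigenvalues
  rw [h, Polynomial.roots_prod _ _ (by simp [Finset.prod_ne_zero_iff, Polynomial.X_sub_C_ne_zero])]
    at hroots
  simp only [Polynomial.roots_X_sub_C, Multiset.bind_singleton, ← Multiset.map_map] at hroots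
  have hmap : Finset.univ.val.map hA.eigenvalues = Finset.univ.val.map d :=
    Multiset.map_injective (RCLike.ofReal_injective (K := 𝕜))
      (by simpa only [Multiset.map_map, Function.comp_def] using hroots.symm)
  exact Equiv.exists_comp_eq_of_map_univ_eq hmap

lemma sum_inner_sum_smul {ι κ 𝕜 F : Type*} [Fintype ι] [Fintype κ] [RCLike 𝕜]
    [NormedAddCommGroup F] [InnerProductSpace 𝕜 F] (α β : ι → κ → 𝕜) (v : κ → F) :
    ∑ i, inner 𝕜 (∑ p, α i p • v p) (∑ q, β i q • v q)
      = ∑ p, ∑ q, (∑ i, starRingEnd 𝕜 (α i p) * β i q) * inner 𝕜 (v p) (v q) := by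
  calc ∑ i, inner 𝕜 (∑ p, α i p • v p) (∑ q, β i q • v q)
      = ∑ i, ∑ p, ∑ q, starRingEnd 𝕜 (α i p) * β i q * inner 𝕜 (v p) (v q) := by
        refine Finset.sum_congr rfl fun i _ => ?_
        simp only [sum_inner, inner_sum, inner_smul_left, inner_smul_right, Finset.mul_sum]
        rw [Finset.sum_comm]
        exact Finset.sum_congr rfl fun p _ => Finset.sum_congr rfl fun q _ => by ring
    _ = _ := by
        rw [Finset.sum_comm]
        simp only [Finset.sum_mul]
        exact Finset.sum_congr rfl fun p _ => Finset.sum_comm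

lemma sum_prod_ite_fst_eq_snd {α β : Type*} [Fintype α] [DecidableEq α] [AddCommMonoid β]
    (f : α × α → β) : ∑ q : α × α, (if q.1 = q.2 then f q else 0) = ∑ u, f (u, u) := by
  simp [Fintype.sum_prod_type]

lemma EuclideanSpace.inner_single_one_single_one {𝕜 α : Type*} [RCLike 𝕜] [Fintype α]
    [DecidableEq α] (a b : α) :
    inner 𝕜 (EuclideanSpace.single a (1 : 𝕜)) (EuclideanSpace.single b 1)
      = if a = b then 1 else 0 := by
  simp [EuclideanSpace.inner_single_left]

namespace IDT

open Matrix

variable {N M : ℕ}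

lemma bits_neg (a : Bits N) : -a = a := funext fun n => CharTwo.neg_eq (a n)

lemma bits_add_self (a : Bits N) : a + a = 0 := funext fun n => CharTwo.add_self_eq_zero (a n)

lemma bits_add_add_cancel_left (a b : Bits N) : a + (a + b) = b := by
  rw [← add_assoc, bits_add_self, zero_add]

lemma bits_add_eq_iff {a b c : Bits N} : a + b = c ↔ b = a + c := by
  rw [← sub_eq_iff_eq_add', sub_eq_add_neg, bits_neg, add_comm, eq_comm]

lemma card_bits : Fintype.card (Bits N) = 2 ^ N := by
  simp [ZMod.card]

noncomputable def chi (i j : Bits N) : ℂ := (-1) ^ bdot i j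

lemma chi_comm (i j : Bits N) : chi i j = chi j i := by
  simp only [chi, bdot, mul_comm]

lemma chi_zero_right (i : Bits N) : chi i 0 = 1 := by
  simp [chi, bdot]

lemma chi_add_right (i j k : Bits N) : chi i (j + k) = chi i j * chi i k := by
  rw [chi, chi, chi, ← pow_add, neg_one_pow_eq_pow_mod_two,
    neg_one_pow_eq_pow_mod_two (bdot i j + _)]
  congr 1
  rw [← ZMod.natCast_eq_natCast_iff']
  simp [bdot, ZMod.natCast_val, mul_add, Finset.sum_add_distrib]

lemma chi_add_left (i j k : Bits N) : chi (i + j) k = chi i k * chi j k := by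
  rw [chi_comm, chi_add_right, chi_comm k, chi_comm k]

lemma chi_mul_self (i j : Bits N) : chi i j * chi i j = 1 := by
  rw [← chi_add_right, bits_add_self, chi_zero_right]

lemma star_chi (i j : Bits N) : star (chi i j) = chi i j := by
  simp [chi]

lemma sum_chi (v : Bits N) : ∑ i, chi i v = if v = 0 then 2 ^ N else 0 := by
  split_ifs with hv
  · simp [hv, chi_zero_right]
  obtain ⟨n, hn⟩ := Function.ne_iff.mp hv
  have hvn : v n = 1 := (by decide : ∀ x : ZMod 2, x ≠ 0 → x = 1) _ hn
  have hflip : chi (Pi.single n 1) v = -1 := by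
    rw [chi, bdot, Finset.sum_eq_single n (fun m _ hm => by simp [hm]) (by simp)]
    simp [hvn, ZMod.val_one]
  -- translating by `Pi.single n 1` flips the sign of every term
  have h := Equiv.sum_comp (Equiv.addLeft (Pi.single n 1 : Bits N)) (fun i => chi i v)
  simp only [Equiv.coe_addLeft, chi_add_left, ← Finset.mul_sum, hflip] at h
  linear_combination -h / 2

lemma inv_sqrt_two_pow_mul_self (N : ℕ) :
    (((Real.sqrt (2 ^ N))⁻¹ : ℝ) : ℂ) * (((Real.sqrt (2 ^ N))⁻¹ : ℝ) : ℂ) = (2 ^ N)⁻¹ := by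
  rw [← Complex.ofReal_mul, ← mul_inv, Real.mul_self_sqrt (by positivity)]
  push_cast
  rfl

noncomputable def walsh (f : Bits N → ℂ) (l : Bits N) : ℂ := ∑ u, chi u l * f u

noncomputable def hadamard (N : ℕ) : Matrix (Bits N) (Bits N) ℂ :=
  of fun i l => (((Real.sqrt (2 ^ N))⁻¹ : ℝ) : ℂ) * chi i l

lemma hadamard_conjTranspose : (hadamard N)ᴴ = hadamard N := by
  ext i l
  simp [hadamard, star_chi, chi_comm]

lemma hadamard_mul_self : hadamard N * hadamard N = 1 := by
  ext i k
  have hsum : ∑ l, hadamard N i l * hadamard N l k = (2 ^ N)⁻¹ * ∑ l, chi l (i + k) := by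
    rw [Finset.mul_sum]
    refine Finset.sum_congr rfl fun l _ => ?_
    rw [hadamard, of_apply, of_apply, chi_add_right, chi_comm i, ← inv_sqrt_two_pow_mul_self]
    ring
  rw [mul_apply, hsum, one_apply]
  simp [sum_chi, add_eq_zero_iff_eq_neg, bits_neg]

lemma of_add_eq_hadamard_mul_diagonal (f : Bits N → ℂ) :
    (of fun i j => f (i + j)) = hadamard N * diagonal (walsh f) * hadamard N := by
  rw [← Matrix.mul_one (of _), ← hadamard_mul_self, ← Matrix.mul_assoc]
  congr 1
  ext i l
  rw [mul_diagonal, mul_apply]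
  simp only [of_apply, hadamard, walsh, Finset.mul_sum]
  refine Fintype.sum_equiv (Equiv.addLeft i) _ _ fun j => ?_
  simp only [Equiv.coe_addLeft, chi_add_left]
  linear_combination (-(f (i + j) * (((Real.sqrt (2 ^ N))⁻¹ : ℝ) : ℂ) * chi j l)) * chi_mul_self i l

lemma charpoly_hadamard_conj (A : Matrix (Bits N) (Bits N) ℂ) :
    (hadamard N * A * hadamard N).charpoly = A.charpoly := by
  rw [Matrix.mul_assoc, charpoly_mul_comm, Matrix.mul_assoc, hadamard_mul_self, Matrix.mul_one]

lemma inner_tens {α β : Type*} [Fintype α] [Fintype β]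
    (u u' : EuclideanSpace ℂ α) (v v' : EuclideanSpace ℂ β) :
    ⟪tens u v, tens u' v'⟫ = ⟪u, u'⟫ * ⟪v, v'⟫ := by
  simp only [tens, PiLp.inner_apply, RCLike.inner_apply, WithLp.equiv_symm_apply, map_mul,
    Finset.sum_mul_sum, Fintype.sum_prod_type]
  exact Finset.sum_congr rfl fun a _ => Finset.sum_congr rfl fun b _ => by ring

noncomputable def autocorr (E : Bits N → Bits N → EuclideanSpace ℂ (Fin M)) (u : Bits N) : ℂ :=
  ∑ a, ∑ b, ⟪E (a + u) (b + u), E a b⟫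

lemma inner_Es (E : Bits N → Bits N → EuclideanSpace ℂ (Fin M)) (a b c d : Bits N) :
    ⟪Es E a b, Es E c d⟫ = (2 ^ N)⁻¹ *
      ∑ m, chi m (a + b) * chi m (c + d) * ⟪E (a + m) (b + m), E (c + m) (d + m)⟫ := by
  rw [Es, Es, inner_smul_left, inner_smul_right, Complex.conj_ofReal, ← mul_assoc,
    inv_sqrt_two_pow_mul_self]
  congr 1
  simp only [sum_inner, inner_sum, inner_smul_left, inner_smul_right, inner_tens,
    EuclideanSpace.inner_single_one_single_one, ite_mul, one_mul, zero_mul]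
  simp [chi, mul_assoc, mul_left_comm]

lemma inner_phi (E : Bits N → Bits N → EuclideanSpace ℂ (Fin M)) (i j : Bits N) :
    ⟪phi E j, phi E i⟫ = (2 ^ N)⁻¹ * autocorr E (i + j) := by
  calc ⟪phi E j, phi E i⟫ = ∑ k, ⟪Es E j (j + (i + k)), Es E i k⟫ := by
        simp only [phi, sum_inner, inner_sum, inner_tens,
          EuclideanSpace.inner_single_one_single_one, mul_ite, mul_one, mul_zero, bits_add_eq_iff, Finset.sum_ite_eq', Finset.mem_univ, if_true]
    _ = (2 ^ N)⁻¹ * ∑ m, ∑ k, ⟪E (j + m) (j + (i + k) + m), E (i + m) (k + m)⟫ := by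
        simp only [inner_Es, bits_add_add_cancel_left, chi_mul_self, one_mul, ← Finset.mul_sum]
        rw [Finset.sum_comm]
    _ = (2 ^ N)⁻¹ * autocorr E (i + j) := by
        congr 1
        refine Fintype.sum_equiv (Equiv.addLeft i) _ _ fun m => ?_
        refine Fintype.sum_equiv (Equiv.addRight m) _ _ fun k => ?_
        simp only [Equiv.coe_addLeft, Equiv.coe_addRight]
        congr 2 <;> simp only [add_left_comm, add_comm, bits_add_add_cancel_left]

lemma Ebar_eq_sum_prod (E : Bits N → Bits N → EuclideanSpace ℂ (Fin M)) (l s : Bits N) :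
    Ebar E l s = (2 ^ N : ℂ)⁻¹ • ∑ p : Bits N × Bits N, (chi s p.2 * chi p.1 l) • E p.1 p.2 := by
  rw [Ebar, Fintype.sum_prod_type]
  simp only [chi, pow_add]

lemma sum_chi_Ebar_coeff (l : Bits N) (p q : Bits N × Bits N) :
    ∑ i, starRingEnd ℂ (chi (i + l) p.2 * chi p.1 i) * (chi (i + l) q.2 * chi q.1 i)
      = if p.1 + p.2 = q.1 + q.2 then 2 ^ N * chi l (p.2 + q.2) else 0 := by
  have hterm (i : Bits N) :
      starRingEnd ℂ (chi (i + l) p.2 * chi p.1 i) * (chi (i + l) q.2 * chi q.1 i)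
        = chi l (p.2 + q.2) * chi i ((p.1 + p.2) + (q.1 + q.2)) := by
    simp only [map_mul, Complex.star_def.symm, star_chi, chi_add_left, chi_add_right, chi_comm _ i]
    ring
  simp only [hterm, ← Finset.mul_sum, sum_chi, add_eq_zero_iff_eq_neg, bits_neg]
  split_ifs <;> ring

lemma autocorr_eq_sum_inner_shift (E : Bits N → Bits N → EuclideanSpace ℂ (Fin M)) (u : Bits N) :
    autocorr E u = ∑ p : Bits N × Bits N, ⟪E p.1 p.2, E (p.1 + u) (p.2 + u)⟫ := by
  rw [autocorr, ← Fintype.sum_prod_type']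
  refine Fintype.sum_equiv (Equiv.addRight (u, u)) _ _ fun p => ?_
  simp [add_assoc, bits_add_self]

lemma sum_ite_fst_add_snd_eq (E : Bits N → Bits N → EuclideanSpace ℂ (Fin M)) (l : Bits N)
    (p : Bits N × Bits N) :
    ∑ q : Bits N × Bits N, (if p.1 + p.2 = q.1 + q.2 then 2 ^ N * chi l (p.2 + q.2) else 0)
      * ⟪E p.1 p.2, E q.1 q.2⟫
      = 2 ^ N * ∑ u, chi l u * ⟪E p.1 p.2, E (p.1 + u) (p.2 + u)⟫ := by
  rw [← Equiv.sum_comp (Equiv.addLeft p), ← sum_prod_ite_fst_eq_snd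
    (fun r => chi l r.2 * ⟪E p.1 p.2, E (p.1 + r.1) (p.2 + r.2)⟫), Finset.mul_sum]
  refine Finset.sum_congr rfl fun r _ => ?_
  have hcond : p.1 + p.2 = p.1 + r.1 + (p.2 + r.2) ↔ r.1 = r.2 := by
    rw [add_add_add_comm, left_eq_add, add_eq_zero_iff_eq_neg, bits_neg]
  simp only [Equiv.coe_addLeft, Prod.fst_add, Prod.snd_add, hcond, bits_add_add_cancel_left]
  split_ifs <;> ring

lemma pbar_eq_walsh (E : Bits N → Bits N → EuclideanSpace ℂ (Fin M)) (l : Bits N) :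
    (pbar E l : ℂ) = walsh (fun u => (2 ^ N)⁻¹ * ((2 ^ N)⁻¹ * autocorr E u)) l := by
  have hnorm (i : Bits N) :
      ((‖Ebar E i (i + l)‖ ^ 2 : ℝ) : ℂ) = ⟪Ebar E i (i + l), Ebar E i (i + l)⟫ := by
    rw [inner_self_eq_norm_sq_to_K]
    norm_cast
  calc (pbar E l : ℂ)
      = (2 ^ N)⁻¹ * ∑ i, ⟪Ebar E i (i + l), Ebar E i (i + l)⟫ := by
        simp [pbar, hnorm]
    _ = (2 ^ N)⁻¹ * ((2 ^ N)⁻¹ * (2 ^ N)⁻¹) * ∑ p : Bits N × Bits N, ∑ q : Bits N × Bits N,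
          (if p.1 + p.2 = q.1 + q.2 then 2 ^ N * chi l (p.2 + q.2) else 0)
            * ⟪E p.1 p.2, E q.1 q.2⟫ := by
        simp only [Ebar_eq_sum_prod, inner_smul_left, inner_smul_right, map_inv₀, map_pow,
          map_ofNat, ← mul_assoc, ← Finset.mul_sum]
        rw [sum_inner_sum_smul]
        simp only [sum_chi_Ebar_coeff]
    _ = (2 ^ N)⁻¹ * (2 ^ N)⁻¹ * ∑ p : Bits N × Bits N, ∑ u,
          chi l u * ⟪E p.1 p.2, E (p.1 + u) (p.2 + u)⟫ := by
        simp only [sum_ite_fst_add_snd_eq, ← Finset.mul_sum]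
        field_simp
    _ = walsh (fun u => (2 ^ N)⁻¹ * ((2 ^ N)⁻¹ * autocorr E u)) l := by
        simp only [walsh, autocorr_eq_sum_inner_shift, Finset.mul_sum]
        rw [Finset.sum_comm]
        refine Finset.sum_congr rfl fun u _ => Finset.sum_congr rfl fun p _ => ?_
        rw [chi_comm]
        ring

lemma autocorr_zero {E : Bits N → Bits N → EuclideanSpace ℂ (Fin M)} (hE : Attack E) :
    autocorr E 0 = 2 ^ N := by
  have hrow (a : Bits N) : ∑ b, ⟪E (a + 0) (b + 0), E a b⟫ = 1 := by
    simpa only [add_zero, if_pos] using hE a a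
  rw [autocorr, Finset.sum_congr rfl fun a _ => hrow a, Finset.sum_const, Finset.card_univ,
    card_bits, nsmul_one]
  norm_cast

lemma pbar_nonneg (E : Bits N → Bits N → EuclideanSpace ℂ (Fin M)) (l : Bits N) :
    0 ≤ pbar E l := by
  unfold pbar
  positivity

theorem sigma_eigenvalues_and_entropy_general {N M : ℕ}
    (E : Bits N → Bits N → EuclideanSpace ℂ (Fin M)) (hE : Attack E)
    (σ : Matrix (Bits N) (Bits N) ℂ)
    (hσ : σ = Matrix.of fun i j : Bits N => (2 ^ N : ℂ)⁻¹ * ⟪phi E j, phi E i⟫) :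
    σ.PosSemidef
    ∧ σ.trace = 1
    ∧ (∃ (h : σ.IsHermitian) (e : Bits N ≃ Bits N), ∀ l : Bits N, h.eigenvalues (e l) = pbar E l)
    ∧ vN σ = ∑ c : Bits N, ent2 (pbar E c) := by
  have hσ_diag : σ = hadamard N * diagonal (fun l => (pbar E l : ℂ)) * hadamard N := by
    simp only [hσ, inner_phi, pbar_eq_walsh]
    exact of_add_eq_hadamard_mul_diagonal fun u => (2 ^ N)⁻¹ * ((2 ^ N)⁻¹ * autocorr E u)
  have hpsd : σ.PosSemidef := by
    have hD : (diagonal fun l => (pbar E l : ℂ)).PosSemidef :=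
      posSemidef_diagonal_iff.mpr fun l => Complex.zero_le_real.mpr (pbar_nonneg E l)
    simpa only [hσ_diag, hadamard_conjTranspose] using hD.mul_mul_conjTranspose_same (hadamard N)
  have htrace : σ.trace = 1 := by
    rw [hσ, Matrix.trace]
    simp only [Matrix.diag, of_apply, inner_phi, bits_add_self, autocorr_zero hE,
      Finset.sum_const, Finset.card_univ, card_bits, nsmul_eq_mul]
    push_cast
    field_simp
  obtain ⟨e, he⟩ := hpsd.isHermitian.exists_equiv_eigenvalues_eq (d := pbar E) (by
    rw [hσ_diag, charpoly_hadamard_conj, charpoly_diagonal]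
    rfl)
  refine ⟨hpsd, htrace, ⟨hpsd.isHermitian, e, he⟩, ?_⟩
  rw [vN, dif_pos hpsd.isHermitian, ← Equiv.sum_comp e]
  simp only [he]

/-- The normalized Gram matrix of the purification vectors is a density matrix whose eigenvalues
are exactly Bob's conjugate-basis error probabilities, so its von Neumann entropy equals
`H(A⊕B|b̄)`. -/
theorem sigma_eigenvalues_and_entropy {N M : ℕ} (hN : 1 ≤ N)
    (E : Bits N → Bits N → EuclideanSpace ℂ (Fin M)) (hE : Attack E)
    (σ : Matrix (Bits N) (Bits N) ℂ)
    (hσ : σ = Matrix.of fun i j : Bits N => (2 ^ N : ℂ)⁻¹ * ⟪phi E j, phi E i⟫) :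
    σ.PosSemidef
    ∧ σ.trace = 1
    ∧ (∃ (h : σ.IsHermitian) (e : Bits N ≃ Bits N), ∀ l : Bits N, h.eigenvalues (e l) = pbar E l)
    ∧ vN σ = ∑ c : Bits N, ent2 (pbar E c) :=
  sigma_eigenvalues_and_entropy_general E hE σ hσ

end IDT
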